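/- The set S = {ψ(S_k) : 0 ≤ k ≤ q−1} forms a (q, q, q) complete complementary code: for all k₁, k₂ and all shifts τ with |τ| < q, the aperiodic cross-correlation sum Φ(ψ(S_{k₁}), ψ(S_{k₂}))(τ) equals q² if τ = 0 and k₁ = k₂, and equals 0 otherwise. -/

import Mathlib

open Complex Finset

noncomputable def gfTr (p r : ℕ) [Fact p.Prime] : GaloisField p r → ZMod p :=
  Algebra.trace (ZMod p) (GaloisField p r)

/-- The additive character `χ_b(c) = exp(2πi·Tr(bc)/p)`. -/
noncomputable def chi (p r : ℕ) [Fact p.Prime] (b c : GaloisField p r) : ℂ :=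
  Complex.exp (2 * Real.pi * Complex.I * ((gfTr p r (b * c)).val : ℂ) / p)

/-- `a(0) = 0` and `a(i) = α^{i-1}` for `i ≥ 1`. -/
noncomputable def aMap {p r : ℕ} [Fact p.Prime] (α : GaloisField p r) (i : ℕ) :
    GaloisField p r :=
  if i = 0 then 0 else α ^ (i - 1)

/-- The dot product `k·i` of the base-`p` digit vectors of `k` and `i`. -/
def dotDigits (p r k i : ℕ) : ℕ :=
  ∑ j ∈ Finset.range r, (k / p ^ j % p) * (i / p ^ j % p)

/-- The sequence entries `S_{k,l}(i) = ω_p^{(k·i) + Tr(a(i)a(l))}`. -/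
noncomputable def Skl (p r : ℕ) [Fact p.Prime] (α : GaloisField p r) (k l i : ℕ) : ℂ :=
  Complex.exp (2 * Real.pi * Complex.I / p) ^
    (dotDigits p r k i + (gfTr p r (aMap α i * aMap α l)).val)

/-!
Writing `ψ` for the standard additive character of `ZMod p`, the entries factor as
`S_{k,l}(i) = ψ(k·i) · ψ(Tr(a(i) a(l)))`, so the correlation splits into two orthogonality
relations. Summing over `l` first, `a(l)` runs through the whole field and the primitive character
`x ↦ ψ(Tr x)` kills every term with `a(i) ≠ a(i+τ)`; as `a` is injective on `[0, q)`, only `τ = 0`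
survives, with a factor `q`. What remains is `∑ᵢ ψ(k₁·i - k₂·i)`, in which the digit vector of `i`
runs through all of `(ZMod p)ʳ`, so it is `q` or `0` according as `k₁ = k₂`.
-/

namespace AddChar

variable {A M : Type*} [AddCommMonoid A] [CommMonoid M]

lemma map_sum_eq_prod {ι : Type*} (ψ : AddChar A M) (s : Finset ι) (f : ι → A) :
    ψ (∑ i ∈ s, f i) = ∏ i ∈ s, ψ (f i) := by
  induction s using Finset.cons_induction with
  | empty => simp
  | cons a s ha ih => rw [sum_cons, prod_cons, map_add_eq_mul, ih]

lemma isPrimitive_compAddMonoidHom_trace {K L R : Type*} [Field K] [Field L] [Algebra K L]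
    [FiniteDimensional K L] [Algebra.IsSeparable K L] [CommMonoid R] {ψ : AddChar K R}
    (hψ : ψ.IsPrimitive) :
    (ψ.compAddMonoidHom (Algebra.trace K L).toAddMonoidHom).IsPrimitive := by
  refine IsPrimitive.of_ne_one (ne_one_iff.2 ?_)
  obtain ⟨b, hb⟩ := ne_one_iff.1 (by simpa using hψ one_ne_zero)
  obtain ⟨x, rfl⟩ := Algebra.trace_surjective K L b
  exact ⟨x, hb⟩

lemma sum_pi_apply_sum_mul {R R' ι : Type*} [CommRing R] [Fintype R] [DecidableEq R]
    [CommRing R'] [IsDomain R'] [Fintype ι] [DecidableEq ι] {ψ : AddChar R R'}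
    (hψ : ψ.IsPrimitive) (c : ι → R) :
    ∑ g : ι → R, ψ (∑ j, g j * c j) =
      if c = 0 then (Fintype.card R : R') ^ Fintype.card ι else 0 := by
  simp_rw [map_sum_eq_prod]
  rw [← Fintype.prod_sum fun i (a : R) => ψ (a * c i)]
  simp only [sum_mulShift _ hψ, Nat.cast_ite, Nat.cast_zero, Fintype.prod_ite_zero, prod_const,
    card_univ, funext_iff, Pi.zero_apply]

end AddChar

lemma Finset.sum_comp_eq_sum_univ_of_injOn {α β M : Type*} [Fintype β] [AddCommMonoid M]
    {s : Finset α} {e : α → β} (he : Set.InjOn e s) (hs : #s = Fintype.card β) (g : β → M) :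
    ∑ x ∈ s, g (e x) = ∑ y, g y := by
  classical
  rw [← sum_image he, eq_univ_of_card _ ((card_image_of_injOn he).trans hs)]

lemma exp_two_pi_I_div_pow_eq_stdAddChar (N : ℕ) [NeZero N] (n : ℕ) :
    exp (2 * Real.pi * I / N) ^ n = ZMod.stdAddChar (n : ZMod N) := by
  rw [ZMod.stdAddChar_apply, ZMod.toCircle_natCast, ← exp_nat_mul]
  ring_nf

section Digits

def digitVector (p r i : ℕ) : Fin r → ZMod p := fun j => ((i / p ^ (j : ℕ) : ℕ) : ZMod p)

lemma natCast_dotDigits (p r k i : ℕ) :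
    (dotDigits p r k i : ZMod p) = ∑ j, digitVector p r k j * digitVector p r i j := by
  simp only [dotDigits, digitVector, Nat.cast_sum, Nat.cast_mul, ZMod.natCast_mod]
  exact (Fin.sum_univ_eq_sum_range
    (fun j => ((k / p ^ j : ℕ) : ZMod p) * ((i / p ^ j : ℕ) : ZMod p)) r).symm

lemma digitVector_injOn (p r : ℕ) : Set.InjOn (digitVector p r) (range (p ^ r)) := by
  intro i hi i' hi' h
  have hdigits : finFunctionFinEquiv.symm ⟨i, mem_range.1 hi⟩ =
      finFunctionFinEquiv.symm ⟨i', mem_range.1 hi'⟩ :=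
    funext fun j => Fin.ext <| by
      simpa using (ZMod.natCast_eq_natCast_iff' _ _ _).1 (congrFun h j)
  simpa using finFunctionFinEquiv.symm.injective hdigits

lemma sum_stdAddChar_dotDigits_sub (p r : ℕ) [NeZero p] {k₁ k₂ : ℕ} (h₁ : k₁ < p ^ r)
    (h₂ : k₂ < p ^ r) :
    ∑ i ∈ range (p ^ r), ZMod.stdAddChar (↑(dotDigits p r k₁ i) - ↑(dotDigits p r k₂ i) : ZMod p) =
      if k₁ = k₂ then (p ^ r : ℂ) else 0 := by
  have hdot : ∀ i, (↑(dotDigits p r k₁ i) - ↑(dotDigits p r k₂ i) : ZMod p) =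
      ∑ j, digitVector p r i j * (digitVector p r k₁ - digitVector p r k₂) j := fun i => by
    simp only [natCast_dotDigits, ← sum_sub_distrib, Pi.sub_apply, mul_sub, mul_comm]
  simp_rw [hdot]
  rw [Finset.sum_comp_eq_sum_univ_of_injOn (digitVector_injOn p r) (by simp)
      (fun g => ZMod.stdAddChar (∑ j, g j * (digitVector p r k₁ - digitVector p r k₂) j)),
    AddChar.sum_pi_apply_sum_mul (ZMod.isPrimitive_stdAddChar p)]
  simp only [sub_eq_zero, (digitVector_injOn p r).eq_iff (mem_range.2 h₁) (mem_range.2 h₂),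
    ZMod.card, Fintype.card_fin]

end Digits

section Trace

variable {p r : ℕ} [Fact p.Prime]

lemma aMap_injOn {α : GaloisField p r} (hα : orderOf α = p ^ r - 1) :
    Set.InjOn (aMap α) (range (p ^ r)) := by
  intro i hi j hj h
  simp only [coe_range, Set.mem_Iio] at hi hj
  have hα0 : ∀ n, 0 < n → n < p ^ r → α ≠ 0 := fun n hn hnq =>
    (hα ▸ IsPrimitiveRoot.orderOf α).ne_zero (by omega)
  rcases i with _ | i <;> rcases j with _ | j
  · rfl
  · exact absurd h.symm (pow_ne_zero _ (hα0 _ (by omega) hj))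
  · exact absurd h (pow_ne_zero _ (hα0 _ (by omega) hi))
  · have : i = j := pow_injOn_Iio_orderOf (x := α) (show i < orderOf α by omega)
      (show j < orderOf α by omega) h
    rw [this]

variable (p r) in
noncomputable def traceChar : AddChar (GaloisField p r) ℂ :=
  ZMod.stdAddChar.compAddMonoidHom (Algebra.trace (ZMod p) (GaloisField p r)).toAddMonoidHom

lemma traceChar_apply (x : GaloisField p r) : traceChar p r x = ZMod.stdAddChar (gfTr p r x) :=
  rfl

lemma sum_traceChar_aMap_mul_sub (hr : 0 < r) {α : GaloisField p r}
    (hα : orderOf α = p ^ r - 1) {i i' : ℕ} (hi : i < p ^ r) (hi' : i' < p ^ r) :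
    ∑ l ∈ range (p ^ r), traceChar p r (aMap α l * (aMap α i - aMap α i')) =
      if i = i' then (p ^ r : ℂ) else 0 := by
  classical
  have := Fintype.ofFinite (GaloisField p r)
  have hcard : Fintype.card (GaloisField p r) = p ^ r := by
    rw [← Nat.card_eq_fintype_card, GaloisField.card p r hr.ne']
  have hprim : (traceChar p r).IsPrimitive :=
    AddChar.isPrimitive_compAddMonoidHom_trace (ZMod.isPrimitive_stdAddChar p)
  rw [Finset.sum_comp_eq_sum_univ_of_injOn (aMap_injOn hα) (by rw [card_range, hcard])
      (fun x => traceChar p r (x * (aMap α i - aMap α i'))), AddChar.sum_mulShift _ hprim]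
  simp only [sub_eq_zero, (aMap_injOn hα).eq_iff (mem_range.2 hi) (mem_range.2 hi'), hcard,
    Nat.cast_ite, Nat.cast_pow, Nat.cast_zero]

end Trace

lemma Skl_eq_stdAddChar (p r : ℕ) [Fact p.Prime] (α : GaloisField p r) (k l i : ℕ) :
    Skl p r α k l i =
      ZMod.stdAddChar ((dotDigits p r k i : ZMod p) + gfTr p r (aMap α i * aMap α l)) := by
  rw [Skl, exp_two_pi_I_div_pow_eq_stdAddChar, Nat.cast_add, ZMod.natCast_zmod_val]

lemma Skl_mul_conj (p r : ℕ) [Fact p.Prime] (α : GaloisField p r) (k₁ k₂ l i i' : ℕ) :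
    Skl p r α k₁ l i * starRingEnd ℂ (Skl p r α k₂ l i') =
      ZMod.stdAddChar (↑(dotDigits p r k₁ i) - ↑(dotDigits p r k₂ i') : ZMod p) *
        traceChar p r (aMap α l * (aMap α i - aMap α i')) := by
  rw [Skl_eq_stdAddChar, Skl_eq_stdAddChar, ← AddChar.map_neg_eq_conj, traceChar_apply,
    ← AddChar.map_add_eq_mul, ← AddChar.map_add_eq_mul]
  congr 1
  simp only [gfTr, mul_sub, map_sub, mul_comm (aMap α i) (aMap α l),
    mul_comm (aMap α i') (aMap α l)]
  ring

lemma sum_Skl_mul_conj {p r : ℕ} [Fact p.Prime] (hr : 0 < r) {α : GaloisField p r}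
    (hα : orderOf α = p ^ r - 1) (k₁ k₂ : ℕ) {i i' : ℕ} (hi : i < p ^ r) (hi' : i' < p ^ r) :
    ∑ l ∈ range (p ^ r), Skl p r α k₁ l i * starRingEnd ℂ (Skl p r α k₂ l i') =
      if i = i' then
        (p ^ r : ℂ) * ZMod.stdAddChar (↑(dotDigits p r k₁ i) - ↑(dotDigits p r k₂ i) : ZMod p)
      else 0 := by
  simp_rw [Skl_mul_conj, ← mul_sum, sum_traceChar_aMap_mul_sub hr hα hi hi']
  split_ifs with h
  · rw [h, mul_comm]
  · rw [mul_zero]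

theorem stmt_10_general (p r : ℕ) [Fact p.Prime] (hr : 0 < r) (α : GaloisField p r)
    (hα : orderOf α = p ^ r - 1) (k₁ k₂ τ : ℕ) (h₁ : k₁ < p ^ r) (h₂ : k₂ < p ^ r) :
    ∑ l ∈ Finset.range (p ^ r), ∑ i ∈ Finset.range (p ^ r - τ),
      Skl p r α k₁ l i * (starRingEnd ℂ) (Skl p r α k₂ l (i + τ)) =
      if τ = 0 ∧ k₁ = k₂ then (p ^ r : ℂ) ^ 2 else 0 := by
  rw [sum_comm, sum_congr rfl fun i hi =>
    have hi := mem_range.1 hi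
    sum_Skl_mul_conj hr hα k₁ k₂ (i := i) (i' := i + τ) (by omega) (by omega)]
  rcases Nat.eq_zero_or_pos τ with rfl | hτ₀
  · simp only [add_zero, if_true, Nat.sub_zero, ← mul_sum,
      sum_stdAddChar_dotDigits_sub p r h₁ h₂, true_and]
    split_ifs <;> ring
  · rw [if_neg (by omega)]
    exact sum_eq_zero fun i _ => if_neg (by omega)

/-- The set `S = {ψ(S_k) : 0 ≤ k ≤ q-1}` forms a `(q, q, q)`-CCC. -/
theorem stmt_10 (p r : ℕ) [Fact p.Prime] (hr : 0 < r) (α : GaloisField p r)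
    (hα : orderOf α = p ^ r - 1) (k₁ k₂ τ : ℕ) (h₁ : k₁ < p ^ r) (h₂ : k₂ < p ^ r)
    (hτ : τ < p ^ r) :
    ∑ l ∈ Finset.range (p ^ r), ∑ i ∈ Finset.range (p ^ r - τ),
      Skl p r α k₁ l i * (starRingEnd ℂ) (Skl p r α k₂ l (i + τ)) =
      if τ = 0 ∧ k₁ = k₂ then (p ^ r : ℂ) ^ 2 else 0 :=
  stmt_10_general p r hr α hα k₁ k₂ τ h₁ h₂
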